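/- arXiv:1210.5236 — 4 statements merged into one kernel-verified Lean document; each statement's English description precedes it below -/
import Mathlib

section
/- Let P be an irreducible transition matrix on a finite state space with stationary distribution π, let α ∈ (0,1), let t ≥ 0, and suppose that for every state x and every set A with π(A) ≥ α we have P^t(x,A) ≥ α/2. Then for any sequence of sets (A_s)_{s≥0} with π(A_s) ≥ α for all s, and any starting state x, the expected hitting time E_x[τ_A] of the moving target, where τ_A = inf{s ≥ 0 : X_s ∈ A_s}, satisfies E_x[τ_A] ≤ 2t/α. -/
open scoped ENNReal

/-- `surv P x A t y` is the probability that the chain with transition matrix `P`,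
started at `x`, has avoided the moving target `(A s)` at all times `s ≤ t` and is at `y`
at time `t`.  Thus `∑ y, surv P x A t y = P_x(τ_A > t)`. -/
noncomputable def surv {S : Type*} [Fintype S] [DecidableEq S]
    (P : Matrix S S ℝ≥0∞) (x : S) (A : ℕ → Finset S) : ℕ → S → ℝ≥0∞
  | 0 => fun y => if y = x ∧ y ∉ A 0 then 1 else 0
  | t + 1 => fun y => if y ∈ A (t + 1) then 0 else ∑ z, surv P x A t z * P z y

/-- Expected hitting time `E_x[τ_A]` of the moving target `(A s)`, via
`E_x[τ_A] = ∑_{t ≥ 0} P_x(τ_A > t)`. -/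
noncomputable def ehit {S : Type*} [Fintype S] [DecidableEq S]
    (P : Matrix S S ℝ≥0∞) (x : S) (A : ℕ → Finset S) : ℝ≥0∞ :=
  ∑' t : ℕ, ∑ y, surv P x A t y

/-!
Every `t` steps the chain, wherever it is, lands in the current target with probability at
least `α / 2`, so the survival probability `P_x(τ_A > s)` is at most `(1 - α / 2) ^ ⌊s / t⌋`.
Summing this tail bound over `s` gives `E_x[τ_A] ≤ t / (α / 2) = 2t / α`.
-/

section MovingTarget

open Finset Matrix

theorem ENNReal.tsum_comp_nat_div (f : ℕ → ℝ≥0∞) {t : ℕ} (ht : t ≠ 0) :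
    ∑' s : ℕ, f (s / t) = t * ∑' k : ℕ, f k := by
  have : NeZero t := ⟨ht⟩
  have hdiv : ∀ p : ℕ × Fin t, ((Nat.divModEquiv t).symm p : ℕ) / t = p.1 := by
    rintro ⟨k, j⟩
    change (k * t + (j : ℕ)) / t = k
    rw [add_comm, Nat.add_mul_div_right _ _ (Nat.pos_of_ne_zero ht), Nat.div_eq_of_lt j.2,
      zero_add]
  rw [← (Nat.divModEquiv t).symm.tsum_eq, tsum_congr fun p => congrArg f (hdiv p),
    ENNReal.tsum_prod (f := fun k _ => f k), ← ENNReal.tsum_mul_left]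
  simp [tsum_fintype, mul_comm]

variable {S : Type*} [Fintype S] [DecidableEq S]
  {P : Matrix S S ℝ≥0∞} {x : S} {A : ℕ → Finset S}

theorem surv_eq_zero_of_mem {s : ℕ} {y : S} (hy : y ∈ A s) : surv P x A s y = 0 := by
  cases s with
  | zero => simp [surv, hy]
  | succ s => simp [surv, hy]

theorem surv_succ_le (s : ℕ) (y : S) : surv P x A (s + 1) y ≤ ∑ z, surv P x A s z * P z y := by
  simp only [surv]
  split_ifs
  exacts [zero_le, le_rfl]

theorem surv_add_le (s u : ℕ) (y : S) :
    surv P x A (s + u) y ≤ ∑ z, surv P x A s z * (P ^ u) z y := by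
  induction u generalizing y with
  | zero => simp [one_apply, mul_ite, sum_ite_eq']
  | succ u ih =>
    calc surv P x A (s + u + 1) y
        ≤ ∑ z, surv P x A (s + u) z * P z y := surv_succ_le _ _
      _ ≤ ∑ z, (∑ w, surv P x A s w * (P ^ u) w z) * P z y := by gcongr with z; exact ih z
      _ = ∑ w, surv P x A s w * (P ^ (u + 1)) w y := by
        simp_rw [pow_succ, mul_apply, sum_mul, mul_sum, mul_assoc]
        exact sum_comm

theorem surv_eq_zero_of_mem_zero (hx : x ∈ A 0) (s : ℕ) (y : S) : surv P x A s y = 0 := by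
  induction s generalizing y with
  | zero => simp only [surv]; grind
  | succ s ih => simp [surv, ih]

theorem ehit_eq_zero_of_mem_zero (hx : x ∈ A 0) : ehit P x A = 0 := by
  simp [ehit, surv_eq_zero_of_mem_zero hx]

theorem sum_surv_zero_le_one : ∑ y, surv P x A 0 y ≤ 1 := by
  calc ∑ y, surv P x A 0 y ≤ ∑ y, if y = x then 1 else 0 := by
        gcongr with y
        simp only [surv]
        split_ifs <;> simp_all
    _ = 1 := by simp

theorem sum_compl_le_one_sub {Q : Matrix S S ℝ≥0∞} (hQ : Q ∈ rowStochastic ℝ≥0∞ S)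
    (B : Finset S) (z : S) : ∑ y ∈ Bᶜ, Q z y ≤ 1 - ∑ y ∈ B, Q z y := by
  refine ENNReal.le_sub_of_add_le_left ?_ ?_
  · exact ne_top_of_le_ne_top ENNReal.one_ne_top
      (sum_row_of_mem_rowStochastic hQ z ▸ sum_le_sum_of_subset (subset_univ B))
  · rw [sum_add_sum_compl, sum_row_of_mem_rowStochastic hQ z]

theorem sum_surv_succ_le (hP : P ∈ rowStochastic ℝ≥0∞ S) (s : ℕ) :
    ∑ y, surv P x A (s + 1) y ≤ ∑ y, surv P x A s y :=
  calc ∑ y, surv P x A (s + 1) y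
      ≤ ∑ y, ∑ z, surv P x A s z * P z y := sum_le_sum fun y _ => surv_succ_le s y
    _ = ∑ z, surv P x A s z := by
      rw [sum_comm]
      simp [← mul_sum, sum_row_of_mem_rowStochastic hP]

theorem antitone_sum_surv (hP : P ∈ rowStochastic ℝ≥0∞ S) :
    Antitone fun s => ∑ y, surv P x A s y :=
  antitone_nat_of_succ_le (sum_surv_succ_le hP)

theorem sum_surv_add_le_mul (hP : P ∈ rowStochastic ℝ≥0∞ S) {β : ℝ≥0∞} {s t : ℕ}
    (hβ : ∀ z, β ≤ ∑ a ∈ A (s + t), (P ^ t) z a) :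
    ∑ y, surv P x A (s + t) y ≤ (1 - β) * ∑ y, surv P x A s y := by
  set B := A (s + t)
  calc ∑ y, surv P x A (s + t) y
      = ∑ y ∈ Bᶜ, surv P x A (s + t) y :=
        (sum_subset (subset_univ _) fun y _ hy => surv_eq_zero_of_mem (by simpa using hy)).symm
    _ ≤ ∑ y ∈ Bᶜ, ∑ z, surv P x A s z * (P ^ t) z y := sum_le_sum fun y _ => surv_add_le s t y
    _ = ∑ z, surv P x A s z * ∑ y ∈ Bᶜ, (P ^ t) z y := by
      rw [sum_comm]
      simp_rw [mul_sum]
    _ ≤ ∑ z, surv P x A s z * (1 - β) := by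
      gcongr with z
      exact (sum_compl_le_one_sub (pow_mem hP t) B z).trans (tsub_le_tsub_left (hβ z) 1)
    _ = (1 - β) * ∑ y, surv P x A s y := by rw [← sum_mul, mul_comm]

theorem sum_surv_mul_le_pow (hP : P ∈ rowStochastic ℝ≥0∞ S) {β : ℝ≥0∞} {t : ℕ}
    (hβ : ∀ s z, β ≤ ∑ a ∈ A s, (P ^ t) z a) (k : ℕ) :
    ∑ y, surv P x A (k * t) y ≤ (1 - β) ^ k := by
  induction k with
  | zero => simpa using sum_surv_zero_le_one
  | succ k ih =>
    calc ∑ y, surv P x A ((k + 1) * t) y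
        = ∑ y, surv P x A (k * t + t) y := by rw [add_one_mul]
      _ ≤ (1 - β) * ∑ y, surv P x A (k * t) y := sum_surv_add_le_mul hP fun z => hβ _ z
      _ ≤ (1 - β) ^ (k + 1) := by rw [pow_succ']; gcongr

theorem sum_surv_le_pow_div (hP : P ∈ rowStochastic ℝ≥0∞ S) {β : ℝ≥0∞} {t : ℕ}
    (hβ : ∀ s z, β ≤ ∑ a ∈ A s, (P ^ t) z a) (s : ℕ) :
    ∑ y, surv P x A s y ≤ (1 - β) ^ (s / t) :=
  (antitone_sum_surv hP (Nat.div_mul_le_self s t)).trans (sum_surv_mul_le_pow hP hβ _)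

theorem ehit_le_div (hP : P ∈ rowStochastic ℝ≥0∞ S) {β : ℝ≥0∞} {t : ℕ} (ht : t ≠ 0)
    (hβ : ∀ s z, β ≤ ∑ a ∈ A s, (P ^ t) z a) :
    ehit P x A ≤ t / β := by
  have hβ1 : β ≤ 1 := (hβ 0 x).trans <| sum_row_of_mem_rowStochastic (pow_mem hP t) x ▸
    sum_le_sum_of_subset (subset_univ _)
  calc ehit P x A ≤ ∑' s : ℕ, (1 - β) ^ (s / t) :=
        ENNReal.tsum_le_tsum (sum_surv_le_pow_div hP hβ)
    _ = t / β := by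
      rw [ENNReal.tsum_comp_nat_div _ ht, ENNReal.tsum_geometric,
        ENNReal.sub_sub_cancel ENNReal.one_ne_top hβ1, div_eq_mul_inv]

end MovingTarget

theorem stmt0_general {S : Type*} [Fintype S] [DecidableEq S]
    (P : Matrix S S ℝ≥0∞) (π : S → ℝ≥0∞)
    (hstoch : ∀ a, ∑ b, P a b = 1)
    (α : ℝ≥0∞) (hα0 : 0 < α) (t : ℕ)
    (hmix : ∀ (x : S) (A : Finset S), α ≤ ∑ a ∈ A, π a → α / 2 ≤ ∑ a ∈ A, (P ^ t) x a)
    (A : ℕ → Finset S) (hA : ∀ s, α ≤ ∑ a ∈ A s, π a) (x : S) :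
    ehit P x A ≤ 2 * t / α := by
  rcases eq_or_ne t 0 with rfl | ht
  · -- `P ^ 0 = 1`, so `hmix` at `x` forces the chain to start inside the target.
    have hx : x ∈ A 0 := by
      by_contra hx
      have := hmix x (A 0) (hA 0)
      simp [Matrix.one_apply, hx, hα0.ne'] at this
    simp [ehit_eq_zero_of_mem_zero hx]
  · have hP : P ∈ Matrix.rowStochastic ℝ≥0∞ S :=
      Matrix.mem_rowStochastic_iff_sum.2 ⟨fun _ _ => zero_le, hstoch⟩
    calc ehit P x A ≤ t / (α / 2) := ehit_le_div hP ht fun s z => hmix z _ (hA s)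
      _ = 2 * t / α := by
        rw [div_eq_mul_inv, ENNReal.inv_div (by simp) (by simp), mul_div_assoc', mul_comm]

theorem stmt0 {S : Type*} [Fintype S] [DecidableEq S]
    (P : Matrix S S ℝ≥0∞) (π : S → ℝ≥0∞)
    (hstoch : ∀ a, ∑ b, P a b = 1)
    (hirr : ∀ a b, ∃ k, 0 < (P ^ k) a b)
    (hstat : ∀ b, ∑ a, π a * P a b = π b) (hπ : ∑ a, π a = 1)
    (α : ℝ≥0∞) (hα0 : 0 < α) (hα1 : α < 1) (t : ℕ)
    (hmix : ∀ (x : S) (A : Finset S), α ≤ ∑ a ∈ A, π a → α / 2 ≤ ∑ a ∈ A, (P ^ t) x a)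
    (A : ℕ → Finset S) (hA : ∀ s, α ≤ ∑ a ∈ A s, π a) (x : S) :
    ehit P x A ≤ 2 * t / α :=
  stmt0_general P π hstoch α hα0 t hmix A hA x
end

section
/- Let (X_s) be a finite Markov chain, t ≥ 1, A a set, α > 0, and x a state with P^t(x,A) < π(A) - (α + ε) for some ε > 0 with π(A) - α ≤ 1. Define B_s = {y : P^{t-s}(y,A) > π(A) - α} for s < t and B_s = Ω (the whole state space) for s ≥ t, and let τ_B = inf{s ≥ 0 : X_s ∈ B_s}. If θ ∈ (0,1) satisfies (π(A) - α)(1 - θ) > π(A) - (α + ε), then max_z E_z[τ_B] > θ t. -/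
open scoped ENNReal Classical

/-!
Let `β = π(A) - α` and `f s y = P^{t-s}(y, A)`, so that `f s = P f (s+1)` and `f ≥ β` on the target
`B_s` for `s < t`. Stopping the chain when it enters the target, `f 0 x = P^t(x, A)` dominates
`β · P_x(τ_B ≤ t - 1)`; since `P^t(x, A) < β (1 - θ)`, the chain survives up to time `t - 1` with
probability more than `θ`, and then `E_x[τ_B] ≥ ∑_{s < t} P_x(τ_B > s) > θ t`.
-/

namespace MovingTarget

variable {S : Type*} [Fintype S] [DecidableEq S]

/-- `hitBy P x A s = P_x(τ_A ≤ s)`, built up alongside `surv`. -/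
noncomputable def hitBy (P : Matrix S S ℝ≥0∞) (x : S) (A : ℕ → Finset S) : ℕ → ℝ≥0∞
  | 0 => if x ∈ A 0 then 1 else 0
  | s + 1 => hitBy P x A s + ∑ y ∈ A (s + 1), ∑ z, surv P x A s z * P z y

variable (P : Matrix S S ℝ≥0∞) (x : S) (A : ℕ → Finset S)

lemma sum_surv_succ (s : ℕ) :
    ∑ y, surv P x A (s + 1) y = ∑ y ∈ (A (s + 1))ᶜ, ∑ z, surv P x A s z * P z y := by
  simp only [surv]
  rw [Finset.sum_ite, Finset.sum_const_zero, zero_add]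
  exact Finset.sum_congr (by ext; simp) fun _ _ => rfl

lemma sum_mem_add_sum_surv_succ (hstoch : ∀ a, ∑ b, P a b = 1) (s : ℕ) :
    ∑ y ∈ A (s + 1), ∑ z, surv P x A s z * P z y + ∑ y, surv P x A (s + 1) y
      = ∑ z, surv P x A s z := by
  rw [sum_surv_succ, Finset.sum_add_sum_compl, Finset.sum_comm]
  simp_rw [← Finset.mul_sum, hstoch, mul_one]

lemma hitBy_add_sum_surv (hstoch : ∀ a, ∑ b, P a b = 1) (s : ℕ) :
    hitBy P x A s + ∑ y, surv P x A s y = 1 := by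
  induction s with
  | zero =>
    rw [Finset.sum_eq_single x (fun y _ hy => by simp [surv, hy]) (by simp)]
    by_cases h : x ∈ A 0 <;> simp [hitBy, surv, h]
  | succ s ih =>
    rw [hitBy, add_assoc, sum_mem_add_sum_surv_succ P x A hstoch, ih]

lemma sum_surv_antitone (hstoch : ∀ a, ∑ b, P a b = 1) :
    Antitone fun s => ∑ y, surv P x A s y :=
  antitone_nat_of_succ_le fun s =>
    (sum_mem_add_sum_surv_succ P x A hstoch s).symm ▸ le_add_self

lemma natCast_mul_sum_surv_le_ehit (hstoch : ∀ a, ∑ b, P a b = 1) (n : ℕ) :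
    (n : ℝ≥0∞) * ∑ y, surv P x A (n - 1) y ≤ ehit P x A :=
  calc (n : ℝ≥0∞) * ∑ y, surv P x A (n - 1) y
      = ∑ _s ∈ Finset.range n, ∑ y, surv P x A (n - 1) y := by
        rw [Finset.sum_const, Finset.card_range, nsmul_eq_mul]
    _ ≤ ∑ s ∈ Finset.range n, ∑ y, surv P x A s y :=
        Finset.sum_le_sum fun s hs =>
          sum_surv_antitone P x A hstoch (by rw [Finset.mem_range] at hs; omega)
    _ ≤ ehit P x A := ENNReal.sum_le_tsum _

/-- One step of optional stopping for a space-time harmonic `f` that is at least `β` on the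
target. -/
lemma mul_hitBy_add_sum_surv_mul_succ_le (f : ℕ → S → ℝ≥0∞) (β : ℝ≥0∞) (s : ℕ)
    (hf : ∀ z, f s z = ∑ y, P z y * f (s + 1) y) (hB : ∀ y ∈ A (s + 1), β ≤ f (s + 1) y) :
    β * hitBy P x A (s + 1) + ∑ y, surv P x A (s + 1) y * f (s + 1) y
      ≤ β * hitBy P x A s + ∑ z, surv P x A s z * f s z := by
  set g : S → ℝ≥0∞ := fun y => ∑ z, surv P x A s z * P z y
  have hflow : ∑ z, surv P x A s z * f s z = ∑ y, g y * f (s + 1) y := by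
    simp_rw [hf, Finset.mul_sum, g, Finset.sum_mul, mul_assoc]
    exact Finset.sum_comm
  have hstopped : ∑ y, surv P x A (s + 1) y * f (s + 1) y
      = ∑ y ∈ (A (s + 1))ᶜ, g y * f (s + 1) y := by
    rw [← Finset.sum_filter_add_sum_filter_not Finset.univ (· ∈ A (s + 1))]
    simp only [surv]
    rw [Finset.sum_eq_zero fun y hy => by simp [(Finset.mem_filter.mp hy).2], zero_add]
    exact Finset.sum_congr (by ext; simp) fun y hy => by simp [Finset.mem_compl.mp hy, g]
  have hhit : β * ∑ y ∈ A (s + 1), g y ≤ ∑ y ∈ A (s + 1), g y * f (s + 1) y := by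
    rw [Finset.mul_sum]
    exact Finset.sum_le_sum fun y hy => by rw [mul_comm]; exact mul_le_mul_right (hB y hy) _
  rw [hitBy, hflow, hstopped, ← Finset.sum_add_sum_compl (A (s + 1)), mul_add, add_assoc]
  gcongr

lemma mul_hitBy_add_sum_surv_mul_le (f : ℕ → S → ℝ≥0∞) (β : ℝ≥0∞) (n : ℕ)
    (hf : ∀ s < n, ∀ z, f s z = ∑ y, P z y * f (s + 1) y)
    (hB : ∀ s ≤ n, ∀ y ∈ A s, β ≤ f s y) :
    β * hitBy P x A n + ∑ y, surv P x A n y * f n y ≤ f 0 x := by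
  induction n with
  | zero =>
    rw [Finset.sum_eq_single x (fun y _ hy => by simp [surv, hy]) (by simp)]
    by_cases h : x ∈ A 0
    · simpa [hitBy, surv, h] using hB 0 le_rfl x h
    · simp [hitBy, surv, h]
  | succ n ih =>
    exact (mul_hitBy_add_sum_surv_mul_succ_le P x A f β n (hf n n.lt_succ_self)
      (hB (n + 1) le_rfl)).trans
      (ih (fun s hs => hf s (hs.trans n.lt_succ_self)) fun s hs => hB s (hs.trans n.le_succ))

lemma lt_sum_surv_of_hitBy_lt (hstoch : ∀ a, ∑ b, P a b = 1) {θ : ℝ≥0∞} (hθ : θ < 1) (s : ℕ)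
    (h : hitBy P x A s < 1 - θ) : θ < ∑ y, surv P x A s y := by
  by_contra! hle
  have : (1 : ℝ≥0∞) < 1 :=
    calc 1 = hitBy P x A s + ∑ y, surv P x A s y := (hitBy_add_sum_surv P x A hstoch s).symm
      _ ≤ hitBy P x A s + θ := by gcongr
      _ < 1 - θ + θ := ENNReal.add_lt_add_right hθ.ne_top h
      _ = 1 := tsub_add_cancel_of_le hθ.le
  exact this.false

end MovingTarget

open MovingTarget in
theorem stmt2_general {S : Type*} [Fintype S] [DecidableEq S]
    (P : Matrix S S ℝ≥0∞) (π : S → ℝ≥0∞)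
    (hstoch : ∀ a, ∑ b, P a b = 1)
    (t : ℕ) (ht : 1 ≤ t) (A : Finset S) (α ε θ : ℝ≥0∞)
    (hθ1 : θ < 1)
    (hπA1 : (∑ a ∈ A, π a) - α ≤ 1)
    (x : S) (hx : ∑ a ∈ A, (P ^ t) x a < (∑ a ∈ A, π a) - (α + ε))
    (hθ : (∑ a ∈ A, π a) - (α + ε) < ((∑ a ∈ A, π a) - α) * (1 - θ)) :
    ∃ z : S, θ * t < ehit P z
      (fun s => if s < t then
          Finset.univ.filter
            (fun y => (∑ a ∈ A, π a) - α < ∑ a ∈ A, (P ^ (t - s)) y a)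
        else Finset.univ) := by
  set β := (∑ a ∈ A, π a) - α
  set B : ℕ → Finset S := fun s => if s < t then
    Finset.univ.filter (fun y => β < ∑ a ∈ A, (P ^ (t - s)) y a) else Finset.univ
  have hharm : ∀ s < t - 1, ∀ z, ∑ a ∈ A, (P ^ (t - s)) z a
      = ∑ y, P z y * ∑ a ∈ A, (P ^ (t - (s + 1))) y a := fun s hs z => by
    rw [show t - s = t - (s + 1) + 1 by omega, pow_succ']
    simp_rw [Matrix.mul_apply, Finset.mul_sum]
    exact Finset.sum_comm
  have htarget : ∀ s ≤ t - 1, ∀ y ∈ B s, β ≤ ∑ a ∈ A, (P ^ (t - s)) y a := fun s hs y hy => by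
    simp only [B, show s < t by omega, if_true, Finset.mem_filter] at hy
    exact hy.2.le
  have hstop := mul_hitBy_add_sum_surv_mul_le P x B _ β (t - 1) hharm htarget
  have hβ0 : β ≠ 0 := by rintro hβ; simp [hβ] at hθ
  have hβtop : β ≠ ∞ := ne_top_of_le_ne_top ENNReal.one_ne_top hπA1
  have hhit : hitBy P x B (t - 1) < 1 - θ := by
    refine (ENNReal.mul_lt_mul_iff_right hβ0 hβtop).mp ?_
    calc β * hitBy P x B (t - 1) ≤ ∑ a ∈ A, (P ^ (t - 0)) x a := le_self_add.trans hstop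
      _ < (∑ a ∈ A, π a) - (α + ε) := by rwa [Nat.sub_zero]
      _ < β * (1 - θ) := hθ
  refine ⟨x, lt_of_lt_of_le ?_ (natCast_mul_sum_surv_le_ehit P x B hstoch t)⟩
  rw [mul_comm]
  exact (ENNReal.mul_lt_mul_iff_right (by simp; omega) (ENNReal.natCast_ne_top t)).mpr
    (lt_sum_surv_of_hitBy_lt P x B hstoch hθ1 _ hhit)

theorem stmt2 {S : Type*} [Fintype S] [DecidableEq S]
    (P : Matrix S S ℝ≥0∞) (π : S → ℝ≥0∞)
    (hstoch : ∀ a, ∑ b, P a b = 1)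
    (hirr : ∀ a b, ∃ k, 0 < (P ^ k) a b)
    (hstat : ∀ b, ∑ a, π a * P a b = π b) (hπ : ∑ a, π a = 1)
    (t : ℕ) (ht : 1 ≤ t) (A : Finset S) (α ε θ : ℝ≥0∞)
    (hε : 0 < ε) (hθ0 : 0 < θ) (hθ1 : θ < 1)
    (hπA1 : (∑ a ∈ A, π a) - α ≤ 1)
    (x : S) (hx : ∑ a ∈ A, (P ^ t) x a < (∑ a ∈ A, π a) - (α + ε))
    (hθ : (∑ a ∈ A, π a) - (α + ε) < ((∑ a ∈ A, π a) - α) * (1 - θ)) :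
    ∃ z : S, θ * t < ehit P z
      (fun s => if s < t then
          Finset.univ.filter
            (fun y => (∑ a ∈ A, π a) - α < ∑ a ∈ A, (P ^ (t - s)) y a)
        else Finset.univ) :=
  stmt2_general P π hstoch t ht A α ε θ hθ1 hπA1 x hx hθ
end

section
/- Let φ_1, ..., φ_n be nonnegative functions on the two-point space {+,−}, let σ be the swap map on {+,−}, and for each pair i ≤ j let k_{i,j}(ε,ε') = a_{ij} + b_{ij}·1(ε = ε') with a_{ij}, b_{ij} ≥ 0. Define J(φ_1,...,φ_n) = Σ_{(ε_1,...,ε_n) ∈ {+,−}^n} Π_{1≤i≤n} φ_i(ε_i) · Π_{1≤i≤j≤n} k_{i,j}(ε_i,ε_j). Then J(φ_1,...,φ_n) ≤ J(φ_1^σ,...,φ_n^σ), where φ^σ(+) = max{φ(+),φ(−)} and φ^σ(−) = min{φ(+),φ(−)}. -/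
open Finset

private lemma prodMaxMin {ι : Type*} (s : Finset ι) (x y : ι → ℝ)
    (hx : ∀ i, 0 ≤ x i) (hy : ∀ i, 0 ≤ y i) :
    (∏ i ∈ s, x i) + ∏ i ∈ s, y i ≤
      (∏ i ∈ s, max (x i) (y i)) + ∏ i ∈ s, min (x i) (y i) := by
  classical
  induction s using Finset.induction with
  | empty => simp
  | @insert a s ha ih =>
    rw [prod_insert ha, prod_insert ha, prod_insert ha, prod_insert ha]
    set X := ∏ i ∈ s, x i
    set Y := ∏ i ∈ s, y i
    set M := ∏ i ∈ s, max (x i) (y i)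
    set m := ∏ i ∈ s, min (x i) (y i)
    have hXM : X ≤ M := prod_le_prod (fun i _ => hx i) (fun i _ => le_max_left _ _)
    have hYM : Y ≤ M := prod_le_prod (fun i _ => hy i) (fun i _ => le_max_right _ _)
    rcases le_total (y a) (x a) with h | h
    · rw [max_eq_left h, min_eq_right h]
      nlinarith [mul_nonneg (sub_nonneg.2 hXM) (sub_nonneg.2 h),
        mul_nonneg (hy a) (sub_nonneg.2 ih)]
    · rw [max_eq_right h, min_eq_left h]
      nlinarith [mul_nonneg (sub_nonneg.2 hYM) (sub_nonneg.2 h),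
        mul_nonneg (hx a) (sub_nonneg.2 ih)]

private lemma respects_eqvGen {α : Type*} {R : α → α → Prop} {ε : α → Bool}
    (h : ∀ i j, R i j → ε i = ε j) : ∀ i j, Relation.EqvGen R i j → ε i = ε j := by
  intro i j hij
  induction hij with
  | rel i j hr => exact h i j hr
  | refl => rfl
  | symm _ _ _ ih => exact ih.symm
  | trans _ _ _ _ _ ih1 ih2 => exact ih1.trans ih2

set_option maxHeartbeats 1000000 in
open scoped Classical in
private lemma T_eq {α : Type*} [Fintype α] [DecidableEq α] (S : Finset (α × α)) (ψ : α → Bool → ℝ) :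
    ∑ ε : α → Bool, (∏ i, ψ i (ε i)) * (if ∀ p ∈ S, ε p.1 = ε p.2 then 1 else 0)
      = ∏ q : Quotient (Relation.EqvGen.setoid fun i j : α => (i, j) ∈ S),
          ((∏ i ∈ Finset.univ.filter
              (fun i => Quotient.mk (Relation.EqvGen.setoid fun i j : α => (i, j) ∈ S) i = q),
              ψ i true) +
           (∏ i ∈ Finset.univ.filter
              (fun i => Quotient.mk (Relation.EqvGen.setoid fun i j : α => (i, j) ∈ S) i = q),
              ψ i false)) := by
  set st := Relation.EqvGen.setoid fun i j : α => (i, j) ∈ S with hst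
  have h1 : (∑ ε : α → Bool, (∏ i, ψ i (ε i)) * (if ∀ p ∈ S, ε p.1 = ε p.2 then 1 else 0))
      = ∑ ε ∈ Finset.univ.filter (fun ε : α → Bool => ∀ p ∈ S, ε p.1 = ε p.2),
          ∏ i, ψ i (ε i) := by
    rw [Finset.sum_filter]
    exact Finset.sum_congr rfl fun ε _ => by split <;> simp
  have h2 : (∑ ε ∈ Finset.univ.filter (fun ε : α → Bool => ∀ p ∈ S, ε p.1 = ε p.2),
          ∏ i, ψ i (ε i))
      = ∑ g : Quotient st → Bool, ∏ i, ψ i (g (Quotient.mk st i)) := by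
    refine Finset.sum_bij'
      (fun ε hε => Quotient.lift ε (respects_eqvGen
        (fun i j hij => (Finset.mem_filter.1 hε).2 (i, j) hij)))
      (fun g _ => fun i => g (Quotient.mk st i))
      (fun ε hε => Finset.mem_univ _)
      (fun g _ => Finset.mem_filter.2 ⟨Finset.mem_univ _,
        fun p hp => by
          have : Quotient.mk st p.1 = Quotient.mk st p.2 :=
            Quotient.sound (Relation.EqvGen.rel _ _ hp)
          simp [this]⟩)
      (fun ε hε => by funext i; rfl)
      (fun g _ => by funext q; induction q using Quotient.ind; rfl)
      (fun ε hε => rfl)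
  have h3 : ∀ g : Quotient st → Bool,
      (∏ i, ψ i (g (Quotient.mk st i)))
        = ∏ q : Quotient st,
            ∏ i ∈ Finset.univ.filter (fun i => Quotient.mk st i = q), ψ i (g q) := by
    intro g
    rw [← Finset.prod_fiberwise Finset.univ (fun i => Quotient.mk st i)
        (fun i => ψ i (g (Quotient.mk st i)))]
    exact Finset.prod_congr rfl fun q _ => Finset.prod_congr rfl fun i hi => by
      rw [(Finset.mem_filter.1 hi).2]
  rw [h1, h2]
  simp only [h3]
  have e1 : (∏ q : Quotient st,
        ((∏ i ∈ Finset.univ.filter (fun i => Quotient.mk st i = q), ψ i true) +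
         (∏ i ∈ Finset.univ.filter (fun i => Quotient.mk st i = q), ψ i false)))
      = ∏ q : Quotient st, ∑ c : Bool,
          ∏ i ∈ Finset.univ.filter (fun i => Quotient.mk st i = q), ψ i c :=
    Finset.prod_congr rfl fun q _ => (Fintype.sum_bool fun c =>
      ∏ i ∈ Finset.univ.filter (fun i => Quotient.mk st i = q), ψ i c).symm
  rw [e1, ← Finset.sum_prod_piFinset (Finset.univ : Finset Bool)
      (fun q b => ∏ i ∈ Finset.univ.filter (fun i => Quotient.mk st i = q), ψ i b),
      Fintype.piFinset_univ]

set_option maxHeartbeats 1000000 in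
private lemma T_le {α : Type*} [Fintype α] [DecidableEq α] (S : Finset (α × α)) (φ : α → Bool → ℝ)
    (hφ : ∀ i b, 0 ≤ φ i b) :
    (∑ ε : α → Bool, (∏ i, φ i (ε i)) * (if ∀ p ∈ S, ε p.1 = ε p.2 then 1 else 0))
      ≤ ∑ ε : α → Bool,
          (∏ i, (if ε i then max (φ i true) (φ i false) else min (φ i true) (φ i false)))
            * (if ∀ p ∈ S, ε p.1 = ε p.2 then 1 else 0) := by
  classical
  have := T_eq S φ
  have h2 := T_eq S (fun i b => if b then max (φ i true) (φ i false)
    else min (φ i true) (φ i false))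
  rw [this, h2]
  refine Finset.prod_le_prod (fun q _ => ?_) (fun q _ => ?_)
  · exact add_nonneg (Finset.prod_nonneg fun i _ => hφ i true)
      (Finset.prod_nonneg fun i _ => hφ i false)
  · simpa using prodMaxMin _ (fun i => φ i true) (fun i => φ i false)
      (fun i => hφ i true) (fun i => hφ i false)

/-- Two-point rearrangement lemma of Burchard–Schmuckenschläger (Lemma 2.6),
with `true` playing the role of `+` and `false` of `−`. -/
theorem stmt4 (n : ℕ) (φ : Fin n → Bool → ℝ) (hφ : ∀ i b, 0 ≤ φ i b)
    (a b : Fin n → Fin n → ℝ) (ha : ∀ i j, 0 ≤ a i j) (hb : ∀ i j, 0 ≤ b i j) :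
    (∑ ε : Fin n → Bool,
        (∏ i, φ i (ε i)) *
          ∏ p ∈ Finset.univ.filter (fun p : Fin n × Fin n => p.1 ≤ p.2),
            (a p.1 p.2 + b p.1 p.2 * (if ε p.1 = ε p.2 then 1 else 0))) ≤
      ∑ ε : Fin n → Bool,
        (∏ i, (if ε i then max (φ i true) (φ i false) else min (φ i true) (φ i false))) *
          ∏ p ∈ Finset.univ.filter (fun p : Fin n × Fin n => p.1 ≤ p.2),
            (a p.1 p.2 + b p.1 p.2 * (if ε p.1 = ε p.2 then 1 else 0)) := by
  classical
  set P := Finset.univ.filter (fun p : Fin n × Fin n => p.1 ≤ p.2) with hP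
  have expand : ∀ ψ : Fin n → Bool → ℝ,
      (∑ ε : Fin n → Bool, (∏ i, ψ i (ε i)) *
          ∏ p ∈ P, (a p.1 p.2 + b p.1 p.2 * (if ε p.1 = ε p.2 then 1 else 0)))
      = ∑ t ∈ P.powerset, ((∏ p ∈ t, a p.1 p.2) * ∏ p ∈ P \ t, b p.1 p.2) *
          ∑ ε : Fin n → Bool, (∏ i, ψ i (ε i)) *
            (if ∀ p ∈ P \ t, ε p.1 = ε p.2 then 1 else 0) := by
    intro ψ
    have h1 : ∀ ε : Fin n → Bool,
        (∏ p ∈ P, (a p.1 p.2 + b p.1 p.2 * (if ε p.1 = ε p.2 then 1 else 0)))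
        = ∑ t ∈ P.powerset, ((∏ p ∈ t, a p.1 p.2) * ∏ p ∈ P \ t, b p.1 p.2) *
            (if ∀ p ∈ P \ t, ε p.1 = ε p.2 then 1 else 0) := by
      intro ε
      rw [Finset.prod_add]
      refine Finset.sum_congr rfl fun t ht => ?_
      rw [Finset.prod_mul_distrib, Finset.prod_boole]
      ring_nf
    simp only [h1, Finset.mul_sum]
    rw [Finset.sum_comm]
    refine Finset.sum_congr rfl fun t ht => ?_
    exact Finset.sum_congr rfl fun ε _ => by ring
  have key := expand φ
  have key2 := expand (fun i c => if c then max (φ i true) (φ i false)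
    else min (φ i true) (φ i false))
  calc (∑ ε : Fin n → Bool,
        (∏ i, φ i (ε i)) *
          ∏ p ∈ P, (a p.1 p.2 + b p.1 p.2 * (if ε p.1 = ε p.2 then 1 else 0)))
      = ∑ t ∈ P.powerset, ((∏ p ∈ t, a p.1 p.2) * ∏ p ∈ P \ t, b p.1 p.2) *
          ∑ ε : Fin n → Bool, (∏ i, φ i (ε i)) *
            (if ∀ p ∈ P \ t, ε p.1 = ε p.2 then 1 else 0) := key
    _ ≤ ∑ t ∈ P.powerset, ((∏ p ∈ t, a p.1 p.2) * ∏ p ∈ P \ t, b p.1 p.2) *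
          ∑ ε : Fin n → Bool,
            (∏ i, (if ε i then max (φ i true) (φ i false) else min (φ i true) (φ i false))) *
            (if ∀ p ∈ P \ t, ε p.1 = ε p.2 then 1 else 0) := by
        refine Finset.sum_le_sum fun t ht => ?_
        refine mul_le_mul_of_nonneg_left ?_ (mul_nonneg
          (Finset.prod_nonneg fun p _ => ha p.1 p.2)
          (Finset.prod_nonneg fun p _ => hb p.1 p.2))
        exact T_le (P \ t) φ hφ
    _ = _ := key2.symm
end

section
/- For any n ≥ 2 and m divisible by 4, the graph G_{n,m} is vertex transitive. Explicitly: for any vertices i(a,b) and j(c,d), the map φ defined by φ(k(u,v)) = ((k+j−i) mod m)((u+c−a) mod n, (v+d−b) mod n) when j−i is even, and φ(k(u,v)) = ((k+j−i) mod m)((v+c−b) mod n, (u+d−a) mod n) when j−i is odd, is a graph automorphism sending i(a,b) to j(c,d). -/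
/-- Adjacency relation of the graph `G_{n,m}`: vertex `i(a,b)` is written `(i, a, b)` with
`i : ZMod m` the cluster and `a b : ZMod n` the coordinates.  Edges:
(1) short edges between consecutive clusters (any coordinates);
(2) `i(a,b) ~ (i+m/4)(a,d)`, `b ≠ d`, for `i` even;
(3) `i(a,b) ~ (i-m/4)(c,b)`, `a ≠ c`, for `i` even;
(4) `i(a,b) ~ (i+m/4)(c,b)`, `a ≠ c`, for `i` odd;
(5) `i(a,b) ~ (i-m/4)(a,d)`, `b ≠ d`, for `i` odd. -/
def Gadj (n m : ℕ) (v w : ZMod m × ZMod n × ZMod n) : Prop :=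
  (w.1 = v.1 + 1 ∨ w.1 = v.1 - 1) ∨
    (Even v.1.val ∧ w.1 = v.1 + (m / 4 : ℕ) ∧ w.2.1 = v.2.1 ∧ w.2.2 ≠ v.2.2) ∨
      (Even v.1.val ∧ w.1 = v.1 - (m / 4 : ℕ) ∧ w.2.2 = v.2.2 ∧ w.2.1 ≠ v.2.1) ∨
        (Odd v.1.val ∧ w.1 = v.1 + (m / 4 : ℕ) ∧ w.2.2 = v.2.2 ∧ w.2.1 ≠ v.2.1) ∨
          (Odd v.1.val ∧ w.1 = v.1 - (m / 4 : ℕ) ∧ w.2.1 = v.2.1 ∧ w.2.2 ≠ v.2.2)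

/-!
Since `m` is even, the parity of a cluster index is well defined modulo `m` and adding `t`
preserves or flips it according to the parity of `t`. A translation of all three coordinates by
an even cluster shift therefore maps each edge type to itself, while an odd cluster shift
exchanges the roles of the two coordinates in the long edges, which the swap `(u, v) ↦ (v, u)`
undoes. Both maps are bijections, and the shift by `(j - i, ·, ·)` sends `i(a,b)` to `j(c,d)`.
-/

theorem ZMod.even_val_add_iff {m : ℕ} (hm : 2 ∣ m) (x y : ZMod m) :
    Even (x + y).val ↔ (Even x.val ↔ Even y.val) := by
  rcases m with _ | m
  · -- `ZMod 0` is `ℤ`, on which `val` is `natAbs`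
    have natAbs_even_add (x y : ℤ) : Even (x + y).natAbs ↔ (Even x.natAbs ↔ Even y.natAbs) := by
      simp only [Int.natAbs_even, Int.even_add]
    exact natAbs_even_add x y
  · rw [ZMod.val_add, Nat.even_iff, Nat.mod_mod_of_dvd _ hm, ← Nat.even_iff, Nat.even_add]

section

variable {n m : ℕ}

def vertexShift (t : ZMod m) (p q : ZMod n) (v : ZMod m × ZMod n × ZMod n) :
    ZMod m × ZMod n × ZMod n :=
  (v.1 + t, v.2.1 + p, v.2.2 + q)

def swapCoords (v : ZMod m × ZMod n × ZMod n) : ZMod m × ZMod n × ZMod n :=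
  (v.1, v.2.2, v.2.1)

theorem vertexShift_bijective (t : ZMod m) (p q : ZMod n) :
    Function.Bijective (vertexShift t p q) :=
  (Equiv.addRight (t, p, q)).bijective

theorem swapCoords_involutive : Function.Involutive (swapCoords (m := m) (n := n)) :=
  fun _ => rfl

theorem gadj_vertexShift_iff (hm : 2 ∣ m) {t : ZMod m} (ht : Even t.val) (p q : ZMod n)
    (v w : ZMod m × ZMod n × ZMod n) :
    Gadj n m (vertexShift t p q v) (vertexShift t p q w) ↔ Gadj n m v w := by
  have hpar (x : ZMod m) : Even (x + t).val ↔ Even x.val := by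
    rw [ZMod.even_val_add_iff hm, iff_true_intro ht, iff_true]
  simp only [Gadj, vertexShift, add_right_comm _ t, add_sub_right_comm _ t, ne_eq, add_left_inj,
    hpar, ← Nat.not_even_iff_odd]

theorem gadj_vertexShift_swapCoords_iff (hm : 2 ∣ m) {t : ZMod m} (ht : ¬Even t.val)
    (p q : ZMod n) (v w : ZMod m × ZMod n × ZMod n) :
    Gadj n m (vertexShift t p q (swapCoords v)) (vertexShift t p q (swapCoords w)) ↔
      Gadj n m v w := by
  have hpar (x : ZMod m) : Even (x + t).val ↔ ¬Even x.val := by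
    rw [ZMod.even_val_add_iff hm, iff_false_intro ht, iff_false]
  simp only [Gadj, vertexShift, swapCoords, add_right_comm _ t, add_sub_right_comm _ t, ne_eq,
    add_left_inj, hpar, ← Nat.not_even_iff_odd, not_not]
  -- edge types (2), (3) are exchanged with (4), (5)
  exact or_congr_right (or_assoc.symm.trans (or_comm.trans or_assoc))

end

theorem stmt12_general (n m : ℕ) (hm4 : m % 4 = 0)
    (i j : ZMod m) (a b c d : ZMod n) :
    let φ : ZMod m × ZMod n × ZMod n → ZMod m × ZMod n × ZMod n := fun v =>
      if Even ((j - i).val) then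
        (v.1 + j - i, (v.2.1 + c - a, v.2.2 + d - b))
      else
        (v.1 + j - i, (v.2.2 + c - b, v.2.1 + d - a))
    Function.Bijective φ ∧ (∀ v w, Gadj n m v w ↔ Gadj n m (φ v) (φ w)) ∧
      φ (i, (a, b)) = (j, (c, d)) := by
  intro φ
  have h2 : 2 ∣ m := (by norm_num : 2 ∣ 4).trans (Nat.dvd_of_mod_eq_zero hm4)
  by_cases ht : Even (j - i).val
  · have hφ : φ = vertexShift (j - i) (c - a) (d - b) := by
      funext v
      simp only [φ, if_pos ht, vertexShift, add_sub_assoc]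
    rw [hφ]
    exact ⟨vertexShift_bijective _ _ _, fun v w => (gadj_vertexShift_iff h2 ht _ _ v w).symm,
      by simp [vertexShift]⟩
  · have hφ : φ = vertexShift (j - i) (c - b) (d - a) ∘ swapCoords := by
      funext v
      simp only [φ, if_neg ht, Function.comp, vertexShift, swapCoords, add_sub_assoc]
    rw [hφ]
    exact ⟨(vertexShift_bijective _ _ _).comp swapCoords_involutive.bijective,
      fun v w => (gadj_vertexShift_swapCoords_iff h2 ht _ _ v w).symm,
      by simp [vertexShift, swapCoords]⟩

/-- The graph `G_{n,m}` is vertex transitive: the explicit map `φ` is a graph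
automorphism sending `i(a,b)` to `j(c,d)`. -/
theorem stmt12 (n m : ℕ) (hn : 2 ≤ n) (hm : 0 < m) (hm4 : m % 4 = 0)
    (i j : ZMod m) (a b c d : ZMod n) :
    let φ : ZMod m × ZMod n × ZMod n → ZMod m × ZMod n × ZMod n := fun v =>
      if Even ((j - i).val) then
        (v.1 + j - i, (v.2.1 + c - a, v.2.2 + d - b))
      else
        (v.1 + j - i, (v.2.2 + c - b, v.2.1 + d - a))
    Function.Bijective φ ∧ (∀ v w, Gadj n m v w ↔ Gadj n m (φ v) (φ w)) ∧
      φ (i, (a, b)) = (j, (c, d)) :=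
  stmt12_general n m hm4 i j a b c d
end
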